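/- For the metric g_{(r₁,r₂)} on Sp(2) with r₁ + r₂ ≤ 2 and the orthonormal frame e₁ = √(2/r₁)·diag-block of i in the upper-left corner etc., the sectional curvature K(e₁, e_p) equals 2/r₁ for p = 2,3; equals r₁/2 for p = 4,5,6,7; and equals 0 for p = 8,9,10. Consequently Ric(e₁) = 2r₁ + 4/r₁. -/

import Mathlib

open Quaternion

/-- The quaternion unit i. -/
def qI : ℍ[ℝ] := ⟨0, 1, 0, 0⟩
/-- The quaternion unit j. -/
def qJ : ℍ[ℝ] := ⟨0, 0, 1, 0⟩
/-- The quaternion unit k. -/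
def qK : ℍ[ℝ] := ⟨0, 0, 0, 1⟩

/-- The sectional curvature expression K(ξ₁,ξ₂) of the left-invariant metric
g_{(r₁,r₂)} on Sp(2), in terms of the components of ξᵢ = ((xᵢ,yᵢ),(-conj yᵢ,zᵢ)). -/
noncomputable def sp2K (r₁ r₂ : ℝ) (x₁ y₁ z₁ x₂ y₂ z₂ : ℍ[ℝ]) : ℝ :=
  let α₁ : ℍ[ℝ] := y₂ * star y₁ - y₁ * star y₂
  let α₂ : ℍ[ℝ] := star y₂ * y₁ - star y₁ * y₂
  let β₁ : ℍ[ℝ] := x₁ * x₂ - x₂ * x₁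
  let β₂ : ℍ[ℝ] := z₁ * z₂ - z₂ * z₁
  let γ₁ : ℍ[ℝ] := x₁ * y₂ - x₂ * y₁
  let γ₂ : ℍ[ℝ] := y₁ * z₂ - y₂ * z₁
  (1 / 4) * ‖r₁ • γ₁ + r₂ • γ₂‖ ^ 2 + (r₁ / 8) * ‖β₁ + (3 - 2 * r₁) • α₁‖ ^ 2
    + (r₂ / 8) * ‖β₂ + (3 - 2 * r₂) • α₂‖ ^ 2
    + (1 / 2) * ((1 - r₁) ^ 3 + (1 - r₂) ^ 3) * ‖α₁‖ ^ 2

/-!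
Each partner e_p of e₁ = √(2/r₁)·i kills all but one term of K. A second vector of the upper-left
block leaves only β₁ = [x₁, x₂], and since i anticommutes with j and k, ‖β₁‖ = 2‖x₁‖‖x₂‖; an
off-diagonal vector leaves only γ₁ = x₁y₂; a vector of the lower-right block leaves nothing. With
‖e₁‖² = 2/r₁ this gives 2/r₁, r₁/2 and 0, and summing over the frame gives Ric(e₁) = 4/r₁ + 2r₁.
-/

section Anticommute

variable {A : Type*}

lemma smul_mul_smul_of_anticommute [Ring A] [Algebra ℝ A] {a b : A} (h : b * a = -(a * b))
    (s t : ℝ) : (t • b) * (s • a) = -((s • a) * (t • b)) := by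
  rw [smul_mul_smul_comm, smul_mul_smul_comm, h, smul_neg, mul_comm]

lemma norm_commutator_of_anticommute [NormedDivisionRing A] [NormedAlgebra ℝ A] {a b : A}
    (h : b * a = -(a * b)) : ‖a * b - b * a‖ = 2 * (‖a‖ * ‖b‖) := by
  rw [h, sub_neg_eq_add, ← two_smul ℝ, norm_smul, Real.norm_two, norm_mul]

end Anticommute

lemma Quaternion.norm_eq_one_of_sum_sq {a : ℍ[ℝ]}
    (h : a.re ^ 2 + a.imI ^ 2 + a.imJ ^ 2 + a.imK ^ 2 = 1) : ‖a‖ = 1 := by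
  rwa [← pow_eq_one_iff_of_nonneg (norm_nonneg a) two_ne_zero, sq, ← normSq_eq_norm_mul_self,
    normSq_def']

lemma qJ_mul_qI : qJ * qI = -(qI * qJ) := by
  ext <;> simp [re_mul, imI_mul, imJ_mul, imK_mul] <;> simp [qI, qJ]

lemma qK_mul_qI : qK * qI = -(qI * qK) := by
  ext <;> simp [re_mul, imI_mul, imJ_mul, imK_mul] <;> simp [qI, qK]

lemma norm_qI : ‖qI‖ = 1 := norm_eq_one_of_sum_sq (by simp [qI])

lemma norm_qJ : ‖qJ‖ = 1 := norm_eq_one_of_sum_sq (by simp [qJ])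

lemma norm_qK : ‖qK‖ = 1 := norm_eq_one_of_sum_sq (by simp [qK])

lemma sp2K_upper_upper_of_anticommute (r₁ r₂ : ℝ) {x₁ x₂ : ℍ[ℝ]} (h : x₂ * x₁ = -(x₁ * x₂)) :
    sp2K r₁ r₂ x₁ 0 0 x₂ 0 0 = r₁ / 2 * (‖x₁‖ * ‖x₂‖) ^ 2 := by
  simp only [sp2K, star_zero, mul_zero, sub_self, smul_zero, add_zero, norm_zero,
    norm_commutator_of_anticommute h]
  ring

lemma sp2K_upper_offDiag (r₁ r₂ : ℝ) (x y : ℍ[ℝ]) :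
    sp2K r₁ r₂ x 0 0 0 y 0 = r₁ ^ 2 / 4 * (‖x‖ * ‖y‖) ^ 2 := by
  simp [sp2K, norm_smul, norm_mul, mul_pow]
  ring

lemma sp2K_upper_lower (r₁ r₂ : ℝ) (x z : ℍ[ℝ]) : sp2K r₁ r₂ x 0 0 0 0 z = 0 := by
  simp [sp2K]

theorem sp2_ric_e1_general (r₁ r₂ : ℝ) (h₁ : 0 < r₁) :
    (sp2K r₁ r₂ (Real.sqrt (2 / r₁) • qI) 0 0 (Real.sqrt (2 / r₁) • qJ) 0 0 = 2 / r₁) ∧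
    (sp2K r₁ r₂ (Real.sqrt (2 / r₁) • qI) 0 0 (Real.sqrt (2 / r₁) • qK) 0 0 = 2 / r₁) ∧
    (sp2K r₁ r₂ (Real.sqrt (2 / r₁) • qI) 0 0 0 1 0 = r₁ / 2) ∧
    (sp2K r₁ r₂ (Real.sqrt (2 / r₁) • qI) 0 0 0 qI 0 = r₁ / 2) ∧
    (sp2K r₁ r₂ (Real.sqrt (2 / r₁) • qI) 0 0 0 qJ 0 = r₁ / 2) ∧
    (sp2K r₁ r₂ (Real.sqrt (2 / r₁) • qI) 0 0 0 qK 0 = r₁ / 2) ∧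
    (sp2K r₁ r₂ (Real.sqrt (2 / r₁) • qI) 0 0 0 0 (Real.sqrt (2 / r₂) • qI) = 0) ∧
    (sp2K r₁ r₂ (Real.sqrt (2 / r₁) • qI) 0 0 0 0 (Real.sqrt (2 / r₂) • qJ) = 0) ∧
    (sp2K r₁ r₂ (Real.sqrt (2 / r₁) • qI) 0 0 0 0 (Real.sqrt (2 / r₂) • qK) = 0) ∧
    (sp2K r₁ r₂ (Real.sqrt (2 / r₁) • qI) 0 0 (Real.sqrt (2 / r₁) • qJ) 0 0
      + sp2K r₁ r₂ (Real.sqrt (2 / r₁) • qI) 0 0 (Real.sqrt (2 / r₁) • qK) 0 0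
      + sp2K r₁ r₂ (Real.sqrt (2 / r₁) • qI) 0 0 0 1 0
      + sp2K r₁ r₂ (Real.sqrt (2 / r₁) • qI) 0 0 0 qI 0
      + sp2K r₁ r₂ (Real.sqrt (2 / r₁) • qI) 0 0 0 qJ 0
      + sp2K r₁ r₂ (Real.sqrt (2 / r₁) • qI) 0 0 0 qK 0
      + sp2K r₁ r₂ (Real.sqrt (2 / r₁) • qI) 0 0 0 0 (Real.sqrt (2 / r₂) • qI)
      + sp2K r₁ r₂ (Real.sqrt (2 / r₁) • qI) 0 0 0 0 (Real.sqrt (2 / r₂) • qJ)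
      + sp2K r₁ r₂ (Real.sqrt (2 / r₁) • qI) 0 0 0 0 (Real.sqrt (2 / r₂) • qK)
      = 2 * r₁ + 4 / r₁) := by
  set s := Real.sqrt (2 / r₁)
  have hs : ‖s‖ ^ 2 = 2 / r₁ := by rw [Real.norm_eq_abs, sq_abs, Real.sq_sqrt (by positivity)]
  have upper_upper (u : ℍ[ℝ]) (hu : ‖u‖ = 1) (h : u * qI = -(qI * u)) :
      sp2K r₁ r₂ (s • qI) 0 0 (s • u) 0 0 = 2 / r₁ := by
    rw [sp2K_upper_upper_of_anticommute r₁ r₂ (smul_mul_smul_of_anticommute h s s), norm_smul,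
      norm_smul, norm_qI, hu, mul_one, ← sq, ← pow_mul, pow_mul', hs]
    field_simp
  have upper_offDiag (u : ℍ[ℝ]) (hu : ‖u‖ = 1) : sp2K r₁ r₂ (s • qI) 0 0 0 u 0 = r₁ / 2 := by
    rw [sp2K_upper_offDiag, norm_smul, norm_qI, hu, mul_one, mul_one, hs]
    field_simp
    norm_num
  have e₂ := upper_upper qJ norm_qJ qJ_mul_qI
  have e₃ := upper_upper qK norm_qK qK_mul_qI
  have e₄ := upper_offDiag 1 norm_one
  have e₅ := upper_offDiag qI norm_qI
  have e₆ := upper_offDiag qJ norm_qJ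
  have e₇ := upper_offDiag qK norm_qK
  simp only [e₂, e₃, e₄, e₅, e₆, e₇, sp2K_upper_lower, true_and]
  field_simp
  ring

/-- Sectional curvatures K(e₁,e_p) for the orthonormal frame of (Sp(2), g_{(r₁,r₂)}),
and the resulting Ricci curvature Ric(e₁) = 2r₁ + 4/r₁. -/
theorem sp2_ric_e1 (r₁ r₂ : ℝ) (h₁ : 0 < r₁) (h₂ : 0 < r₂) (h : r₁ + r₂ ≤ 2) :
    (sp2K r₁ r₂ (Real.sqrt (2 / r₁) • qI) 0 0 (Real.sqrt (2 / r₁) • qJ) 0 0 = 2 / r₁) ∧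
    (sp2K r₁ r₂ (Real.sqrt (2 / r₁) • qI) 0 0 (Real.sqrt (2 / r₁) • qK) 0 0 = 2 / r₁) ∧
    (sp2K r₁ r₂ (Real.sqrt (2 / r₁) • qI) 0 0 0 1 0 = r₁ / 2) ∧
    (sp2K r₁ r₂ (Real.sqrt (2 / r₁) • qI) 0 0 0 qI 0 = r₁ / 2) ∧
    (sp2K r₁ r₂ (Real.sqrt (2 / r₁) • qI) 0 0 0 qJ 0 = r₁ / 2) ∧
    (sp2K r₁ r₂ (Real.sqrt (2 / r₁) • qI) 0 0 0 qK 0 = r₁ / 2) ∧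
    (sp2K r₁ r₂ (Real.sqrt (2 / r₁) • qI) 0 0 0 0 (Real.sqrt (2 / r₂) • qI) = 0) ∧
    (sp2K r₁ r₂ (Real.sqrt (2 / r₁) • qI) 0 0 0 0 (Real.sqrt (2 / r₂) • qJ) = 0) ∧
    (sp2K r₁ r₂ (Real.sqrt (2 / r₁) • qI) 0 0 0 0 (Real.sqrt (2 / r₂) • qK) = 0) ∧
    (sp2K r₁ r₂ (Real.sqrt (2 / r₁) • qI) 0 0 (Real.sqrt (2 / r₁) • qJ) 0 0
      + sp2K r₁ r₂ (Real.sqrt (2 / r₁) • qI) 0 0 (Real.sqrt (2 / r₁) • qK) 0 0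
      + sp2K r₁ r₂ (Real.sqrt (2 / r₁) • qI) 0 0 0 1 0
      + sp2K r₁ r₂ (Real.sqrt (2 / r₁) • qI) 0 0 0 qI 0
      + sp2K r₁ r₂ (Real.sqrt (2 / r₁) • qI) 0 0 0 qJ 0
      + sp2K r₁ r₂ (Real.sqrt (2 / r₁) • qI) 0 0 0 qK 0
      + sp2K r₁ r₂ (Real.sqrt (2 / r₁) • qI) 0 0 0 0 (Real.sqrt (2 / r₂) • qI)
      + sp2K r₁ r₂ (Real.sqrt (2 / r₁) • qI) 0 0 0 0 (Real.sqrt (2 / r₂) • qJ)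
      + sp2K r₁ r₂ (Real.sqrt (2 / r₁) • qI) 0 0 0 0 (Real.sqrt (2 / r₂) • qK)
      = 2 * r₁ + 4 / r₁) :=
  sp2_ric_e1_general r₁ r₂ h₁
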